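/- Let b < x be reals. Then ∫_b^x ln(x - u) du = (x-b)ln(x-b) - (x-b), and more generally n² ∫_x^{x+1/n} ∫_b^y ln(y-u) du dy = n( (x-b)ln(x-b) - (x-b) ) + (1/2)ln(x-b) + 1/(6n(x-b)) + O(1/n²) as n → ∞ with x - b bounded away from 0. -/

import Mathlib

open intervalIntegral Set Real

/-!
With `t = x - b` and `h = 1/n`, the inner integral is `F (y - b)` for `F s = s log s - s`, so the
double integral is `G (t + h) - G t` for the primitive `G s = s² log s / 2 - 3 s² / 4` of `F`.
The claimed expansion is the third-order Taylor expansion of `G` at `t`. The fourth derivative of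
`G` is `-1/s²`, so the remainder is at most `h⁴ / (24 t²)`, i.e. at most `1 / (24 δ² n²)` after
multiplying by `n²`. The remainder bound comes from integrating `|1/(t + h) - 1/t| ≤ h / t²`
three times.
-/

noncomputable def secondAntiderivLog (s : ℝ) : ℝ := s ^ 2 * log s / 2 - 3 * s ^ 2 / 4

lemma hasDerivAt_secondAntiderivLog {s : ℝ} (hs : s ≠ 0) :
    HasDerivAt secondAntiderivLog (s * log s - s) s := by
  refine ((((hasDerivAt_pow 2 s).mul (hasDerivAt_log hs)).div_const 2).sub
    ((hasDerivAt_pow 2 s).const_mul 3 |>.div_const 4)).congr_deriv ?_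
  field_simp
  ring

lemma abs_le_of_abs_deriv_le_pow {f f' : ℝ → ℝ} {C x : ℝ} {k : ℕ} (hx : 0 ≤ x) (h0 : f 0 = 0)
    (hf : ∀ y ∈ Icc 0 x, HasDerivAt f (f' y) y) (hf' : ∀ y ∈ Icc 0 x, |f' y| ≤ C * y ^ k) :
    |f x| ≤ C * x ^ (k + 1) / (k + 1) := by
  have hB (y : ℝ) : HasDerivAt (fun y => C * y ^ (k + 1) / (k + 1)) (C * y ^ k) y := by
    refine (((hasDerivAt_pow (k + 1) y).const_mul C).div_const ((k : ℝ) + 1)).congr_deriv ?_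
    field_simp
    simp
  exact image_norm_le_of_norm_deriv_right_le_deriv_boundary
    (fun y hy => (hf y hy).continuousAt.continuousWithinAt)
    (fun y hy => (hf y (Ico_subset_Icc_self hy)).hasDerivWithinAt) (by simp [h0]) hB
    (fun y hy => hf' y (Ico_subset_Icc_self hy)) (right_mem_Icc.2 hx)

section Taylor

variable {t h : ℝ}

lemma abs_log_add_sub_taylor_le (ht : 0 < t) (hh : 0 ≤ h) :
    |log (t + h) - log t - h / t| ≤ h ^ 2 / (2 * t ^ 2) := by
  have hderiv (y : ℝ) (hy : y ∈ Icc 0 h) :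
      HasDerivAt (fun y => log (t + y) - log t - y / t) (1 / (t + y) - 1 / t) y := by
    have hty : t + y ≠ 0 := by linarith [hy.1]
    refine (((((hasDerivAt_id' y).const_add t).log hty).sub_const (log t)).sub
      ((hasDerivAt_id' y).div_const t)).congr_deriv ?_
    simp
  have hbound (y : ℝ) (hy : y ∈ Icc 0 h) : |1 / (t + y) - 1 / t| ≤ 1 / t ^ 2 * y ^ 1 := by
    have hty : t ≤ t + y := by linarith [hy.1]
    rw [abs_sub_comm, abs_of_nonneg (sub_nonneg.2 (one_div_le_one_div_of_le ht hty))]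
    calc 1 / t - 1 / (t + y) = y / (t * (t + y)) := by
          field_simp [(ht.trans_le hty).ne']
          ring
      _ ≤ y / (t * t) := by gcongr; exact hy.1
      _ = 1 / t ^ 2 * y ^ 1 := by ring
  refine (abs_le_of_abs_deriv_le_pow hh (by simp) hderiv hbound).trans_eq ?_
  push_cast
  ring

lemma abs_mul_log_add_sub_taylor_le (ht : 0 < t) (hh : 0 ≤ h) :
    |((t + h) * log (t + h) - (t + h)) - (t * log t - t) - h * log t - h ^ 2 / (2 * t)|
      ≤ h ^ 3 / (6 * t ^ 2) := by
  have hderiv (y : ℝ) (hy : y ∈ Icc 0 h) :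
      HasDerivAt (fun y => ((t + y) * log (t + y) - (t + y)) - (t * log t - t) - y * log t
        - y ^ 2 / (2 * t)) (log (t + y) - log t - y / t) y := by
    have hty : t + y ≠ 0 := by linarith [hy.1]
    have hlin := (hasDerivAt_id' y).const_add t
    refine (((((hlin.mul (hlin.log hty)).sub hlin).sub_const _).sub
      ((hasDerivAt_id' y).mul_const (log t))).sub
      ((hasDerivAt_pow 2 y).div_const (2 * t))).congr_deriv ?_
    field_simp
    ring
  have hbound (y : ℝ) (hy : y ∈ Icc 0 h) :
      |log (t + y) - log t - y / t| ≤ 1 / (2 * t ^ 2) * y ^ 2 :=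
    (abs_log_add_sub_taylor_le ht hy.1).trans_eq (by ring)
  refine (abs_le_of_abs_deriv_le_pow hh (by simp) hderiv hbound).trans_eq ?_
  push_cast
  ring

lemma abs_secondAntiderivLog_add_sub_taylor_le (ht : 0 < t) (hh : 0 ≤ h) :
    |secondAntiderivLog (t + h) - secondAntiderivLog t
        - (h * (t * log t - t) + h ^ 2 / 2 * log t + h ^ 3 / (6 * t))| ≤ h ^ 4 / (24 * t ^ 2) := by
  have hderiv (y : ℝ) (hy : y ∈ Icc 0 h) :
      HasDerivAt (fun y => secondAntiderivLog (t + y) - secondAntiderivLog t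
        - (y * (t * log t - t) + y ^ 2 / 2 * log t + y ^ 3 / (6 * t)))
        (((t + y) * log (t + y) - (t + y)) - (t * log t - t) - y * log t - y ^ 2 / (2 * t)) y := by
    have hty : t + y ≠ 0 := by linarith [hy.1]
    have hG := (hasDerivAt_secondAntiderivLog hty).comp y ((hasDerivAt_id' y).const_add t)
    refine ((hG.sub_const _).sub ((((hasDerivAt_id' y).mul_const _).add
      (((hasDerivAt_pow 2 y).div_const 2).mul_const (log t))).add
      ((hasDerivAt_pow 3 y).div_const (6 * t)))).congr_deriv ?_
    field_simp
    ring
  have hbound (y : ℝ) (hy : y ∈ Icc 0 h) :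
      |((t + y) * log (t + y) - (t + y)) - (t * log t - t) - y * log t - y ^ 2 / (2 * t)|
        ≤ 1 / (6 * t ^ 2) * y ^ 3 :=
    (abs_mul_log_add_sub_taylor_le ht hy.1).trans_eq (by ring)
  refine (abs_le_of_abs_deriv_le_pow hh (by simp) hderiv hbound).trans_eq ?_
  push_cast
  ring

end Taylor

lemma integral_log_sub (b x : ℝ) :
    ∫ u in b..x, log (x - u) = (x - b) * log (x - b) - (x - b) := by
  rw [integral_comp_sub_left log x, integral_log]
  simp

lemma integral_integral_log_sub {b x h : ℝ} (hbx : b < x) (hh : 0 ≤ h) :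
    ∫ y in x..x + h, ∫ u in b..y, log (y - u)
      = secondAntiderivLog (x - b + h) - secondAntiderivLog (x - b) := by
  simp only [integral_log_sub]
  rw [integral_comp_sub_right (fun s => s * log s - s), add_sub_right_comm]
  refine integral_eq_sub_of_hasDerivAt (fun s hs => hasDerivAt_secondAntiderivLog ?_)
    ((continuous_mul_log.sub continuous_id).intervalIntegrable _ _)
  rw [uIcc_of_le (by linarith)] at hs
  linarith [hs.1]

/-- `∫_b^x ln(x-u) du = (x-b)ln(x-b) - (x-b)`, and, uniformly for `x - b ≥ δ > 0`,
`n² ∫_x^{x+1/n} ∫_b^y ln(y-u) du dy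
  = n((x-b)ln(x-b) - (x-b)) + (1/2)ln(x-b) + 1/(6n(x-b)) + O(1/n²)`. -/
theorem double_log_integral_expansion :
    (∀ b x : ℝ, b < x →
      (∫ u in b..x, Real.log (x - u)) = (x - b) * Real.log (x - b) - (x - b)) ∧
    ∀ δ : ℝ, 0 < δ → ∃ C : ℝ, ∀ n : ℕ, 1 ≤ n → ∀ b x : ℝ, δ ≤ x - b →
      |(n : ℝ) ^ 2 *
          (∫ y in x..(x + 1 / (n : ℝ)), ∫ u in b..y, Real.log (y - u)) -
        ((n : ℝ) * ((x - b) * Real.log (x - b) - (x - b)) +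
          (1 / 2) * Real.log (x - b) + 1 / (6 * n * (x - b)))| ≤ C / (n : ℝ) ^ 2 := by
  refine ⟨fun b x _ => integral_log_sub b x, fun δ hδ => ⟨1 / (24 * δ ^ 2), ?_⟩⟩
  intro n hn b x hδt
  have hn0 : (0 : ℝ) < n := by exact_mod_cast hn
  have ht : 0 < x - b := hδ.trans_le hδt
  rw [integral_integral_log_sub (by linarith) (by positivity)]
  calc _ = |(n : ℝ) ^ 2 * (secondAntiderivLog (x - b + 1 / n) - secondAntiderivLog (x - b)
          - (1 / n * ((x - b) * log (x - b) - (x - b)) + (1 / n) ^ 2 / 2 * log (x - b)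
            + (1 / n) ^ 3 / (6 * (x - b))))| := by
        congr 1
        field_simp
    _ ≤ (n : ℝ) ^ 2 * ((1 / n) ^ 4 / (24 * (x - b) ^ 2)) := by
        rw [abs_mul, abs_sq]
        gcongr
        exact abs_secondAntiderivLog_add_sub_taylor_le ht (by positivity)
    _ = 1 / (24 * (x - b) ^ 2) / n ^ 2 := by field_simp
    _ ≤ 1 / (24 * δ ^ 2) / n ^ 2 := by gcongr
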